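/- arXiv:1805.12537 — 3 statements merged into one kernel-verified Lean document; each statement's English description precedes it below -/
import Mathlib

section
/- Let f : ℤ_p → ℤ_p be 1-Lipschitz. Then f is bijective on ℤ_p if and only if for every k ≥ 1 the induced map on ℤ/p^kℤ (given by z ↦ f(z) mod p^k) is a bijection of ℤ/p^kℤ. -/
open PadicInt

private lemma tzp_eq_iff' {p : ℕ} [Fact p.Prime] (k : ℕ) (a b : ℤ_[p]) :
    toZModPow k a = toZModPow k b ↔ ‖a - b‖ ≤ (p : ℝ) ^ (-(k : ℤ)) := by
  rw [← sub_eq_zero, ← map_sub, ← RingHom.mem_ker, ker_toZModPow,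
    ← norm_le_pow_iff_mem_span_pow]

private lemma val_cast_tzp' {p : ℕ} [Fact p.Prime] (k : ℕ) (z : ZMod (p ^ k)) :
    toZModPow k ((z.val : ℤ_[p])) = z := by
  haveI : NeZero (p ^ k) := ⟨pow_ne_zero _ (Fact.out (p := p.Prime)).ne_zero⟩
  rw [map_natCast]
  exact ZMod.natCast_rightInverse z

theorem stmt_3 (p : ℕ) [Fact p.Prime] (f : ℤ_[p] → ℤ_[p])
    (hf : ∀ x y : ℤ_[p], ‖f x - f y‖ ≤ ‖x - y‖) :
    Function.Bijective f ↔
    ∀ k : ℕ, 1 ≤ k →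
      Function.Bijective
        (fun z : ZMod (p ^ k) => PadicInt.toZModPow k (f ((z.val : ℤ_[p])))) := by
  have key : ∀ (k : ℕ) (a b : ℤ_[p]), toZModPow k a = toZModPow k b →
      toZModPow k (f a) = toZModPow k (f b) := by
    intro k a b h
    exact (tzp_eq_iff' k _ _).2 (le_trans (hf a b) ((tzp_eq_iff' k a b).1 h))
  constructor
  · intro hbij k _
    haveI : NeZero (p ^ k) := ⟨pow_ne_zero _ (Fact.out (p := p.Prime)).ne_zero⟩
    rw [← Finite.surjective_iff_bijective]
    intro c
    obtain ⟨x, hx⟩ := hbij.2 ((c.val : ℤ_[p]))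
    refine ⟨toZModPow k x, ?_⟩
    have h1 := key k (((toZModPow k x).val : ℤ_[p])) x (val_cast_tzp' k _)
    show toZModPow k (f (((toZModPow k x).val : ℤ_[p]))) = c
    rw [h1, hx, val_cast_tzp' k c]
  · intro H
    constructor
    · intro x y hxy
      by_contra hne
      obtain ⟨k, hk⟩ : ∃ k, toZModPow (p := p) k x ≠ toZModPow k y := by
        by_contra h
        push_neg at h
        exact hne (ext_of_toZModPow.mp h)
      have hk1 : 1 ≤ k := by
        rcases Nat.eq_zero_or_pos k with rfl | h
        · exfalso
          apply hk
          haveI : Subsingleton (ZMod (p ^ 0)) := by rw [pow_zero]; infer_instance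
          exact Subsingleton.elim _ _
        · exact h
      apply hk
      apply (H k hk1).1
      show toZModPow k (f (((toZModPow k x).val : ℤ_[p]))) =
        toZModPow k (f (((toZModPow k y).val : ℤ_[p])))
      have h1 := key k (((toZModPow k x).val : ℤ_[p])) x (val_cast_tzp' k _)
      have h2 := key k (((toZModPow k y).val : ℤ_[p])) y (val_cast_tzp' k _)
      rw [h1, h2, hxy]
    · intro y
      have hcont : Continuous f := by
        apply LipschitzWith.continuous (K := 1)
        intro a b
        rw [edist_dist, edist_dist, dist_eq_norm, dist_eq_norm]
        simpa using ENNReal.ofReal_le_ofReal (hf a b)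
      have hclosed : IsClosed (Set.range f) := (isCompact_range hcont).isClosed
      have hmem : y ∈ closure (Set.range f) := by
        rw [Metric.mem_closure_iff]
        intro ε hε
        have hp1 : (1 : ℝ) < p := by
          exact_mod_cast (Fact.out (p := p.Prime)).one_lt
        obtain ⟨n, hn⟩ : ∃ n : ℕ, (1 / (p : ℝ)) ^ n < ε := by
          apply exists_pow_lt_of_lt_one hε
          rw [div_lt_one (by linarith)]
          linarith
        set k := n + 1 with hkdef
        have hlt : (p : ℝ) ^ (-(k : ℤ)) < ε := by
          have h0 : (0 : ℝ) < p := by linarith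
          have : (p : ℝ) ^ (-(k : ℤ)) = (1 / (p : ℝ)) ^ k := by
            rw [zpow_neg, zpow_natCast, one_div, inv_pow]
          rw [this]
          calc (1 / (p : ℝ)) ^ k ≤ (1 / (p : ℝ)) ^ n := by
                apply pow_le_pow_of_le_one (by positivity) (by
                  rw [div_le_one h0]; linarith) (by omega)
            _ < ε := hn
        obtain ⟨z, hz⟩ := (H k (by omega)).2 (toZModPow k y)
        refine ⟨f ((z.val : ℤ_[p])), Set.mem_range_self _, ?_⟩
        rw [dist_eq_norm]
        calc ‖y - f ((z.val : ℤ_[p]))‖ ≤ (p : ℝ) ^ (-(k : ℤ)) := by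
              have := (tzp_eq_iff' k (f ((z.val : ℤ_[p]))) y).1 hz
              rwa [← norm_neg, neg_sub] at this
          _ < ε := hlt
      rw [hclosed.closure_eq] at hmem
      exact hmem
end

section
/- Let f : ℤ_p → ℤ_p be a 1-Lipschitz function that is both additive (f(x+y)=f(x)+f(y)) and a homomorphism with respect to coordinate-wise XOR (f(x XOR y) = f(x) XOR f(y)), and bijective. Then f is the identity map. -/
/-- The `k`-th digit of the canonical `p`-adic expansion of `x`. -/
noncomputable def padicDigit (p : ℕ) [Fact p.Prime] (x : ℤ_[p]) (k : ℕ) : ℕ :=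
  x.appr (k + 1) / p ^ k % p

/-- Coordinate-wise XOR (digit-wise addition mod p) on `ℤ_[p]`. -/
noncomputable def pXor (p : ℕ) [Fact p.Prime] (x y : ℤ_[p]) : ℤ_[p] :=
  ∑' k : ℕ, (((padicDigit p x k + padicDigit p y k) % p : ℕ) : ℤ_[p]) * (p : ℤ_[p]) ^ k

/-!
An additive 1-Lipschitz map of `ℤ_[p]` is multiplication by `c = f 1`, and surjectivity makes `c`
a unit. A digit `a < p` and a multiple of `p` have no digit position in common, so their XOR is
their sum; applying `f` shows that XOR-ing `c * a` with any multiple of `p` produces no carry.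
If `c * a` had a nonzero digit `d` at a position `k ≥ 1`, XOR-ing it with `(p - d) * p ^ k` would
produce one, so `c * a` is itself a digit. Taking `a = 1` and `a = p - 1` gives `c = d < p` with
`d * (p - 1) < p`, hence `c = 1`.
-/

open Finset

lemma sum_range_mul_pow_lt {b : ℕ} {d : ℕ → ℕ} (hd : ∀ k, d k < b) (n : ℕ) :
    ∑ j ∈ range n, d j * b ^ j < b ^ n := by
  induction n with
  | zero => simp
  | succ n ih =>
    calc ∑ j ∈ range (n + 1), d j * b ^ j
        < b ^ n + d n * b ^ n := by rw [sum_range_succ]; omega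
      _ = (d n + 1) * b ^ n := by ring
      _ ≤ b ^ (n + 1) := by rw [pow_succ']; exact Nat.mul_le_mul_right _ (hd n)

namespace PadicInt

variable {p : ℕ} [hp : Fact p.Prime]

lemma summable_mul_p_pow (c : ℕ → ℤ_[p]) : Summable fun k => c k * (p : ℤ_[p]) ^ k := by
  refine Summable.of_norm_bounded (g := fun k => ((p : ℝ)⁻¹) ^ k)
    (summable_geometric_of_lt_one (by positivity)
      (inv_lt_one_of_one_lt₀ (mod_cast hp.out.one_lt))) fun k => ?_
  calc ‖c k * (p : ℤ_[p]) ^ k‖ ≤ ‖c k‖ * ‖(p : ℤ_[p]) ^ k‖ := norm_mul_le _ _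
    _ ≤ 1 * ((p : ℝ)⁻¹) ^ k := by
      rw [norm_p_pow, zpow_neg, zpow_natCast, ← inv_pow]
      gcongr
      exact norm_le_one _
    _ = ((p : ℝ)⁻¹) ^ k := one_mul _

lemma appr_eq_of_sub_mem_span {x : ℤ_[p]} {n m : ℕ} (hm : m < p ^ n)
    (h : x - m ∈ Ideal.span {(p : ℤ_[p]) ^ n}) : x.appr n = m := by
  rw [← ker_toZModPow, RingHom.mem_ker, map_sub, map_natCast, sub_eq_zero] at h
  have hx : ((x.appr n : ℕ) : ZMod (p ^ n)) = m := h
  rwa [ZMod.natCast_eq_natCast_iff', Nat.mod_eq_of_lt (appr_lt x n),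
    Nat.mod_eq_of_lt hm] at hx

lemma appr_eq_appr_mod (x : ℤ_[p]) {m n : ℕ} (h : m ≤ n) : x.appr m = x.appr n % p ^ m := by
  obtain ⟨c, hc⟩ := dvd_appr_sub_appr x m n h
  rw [Nat.eq_add_of_sub_eq (appr_mono x h) hc, Nat.mul_add_mod_self_left,
    Nat.mod_eq_of_lt (appr_lt x m)]

end PadicInt

section Digits

variable {p : ℕ} [hp : Fact p.Prime]

lemma padicDigit_lt (x : ℤ_[p]) (k : ℕ) : padicDigit p x k < p :=
  Nat.mod_lt _ hp.out.pos

lemma appr_eq_sum_padicDigit (x : ℤ_[p]) (n : ℕ) :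
    x.appr n = ∑ j ∈ range n, padicDigit p x j * p ^ j := by
  induction n with
  | zero => simpa using PadicInt.appr_lt x 0
  | succ n ih =>
    have hquot : x.appr (n + 1) / p ^ n < p :=
      Nat.div_lt_of_lt_mul (by rw [← pow_succ]; exact PadicInt.appr_lt x (n + 1))
    rw [sum_range_succ, ← ih, PadicInt.appr_eq_appr_mod x n.le_succ, padicDigit,
      Nat.mod_eq_of_lt hquot, mul_comm, Nat.mod_add_div]

lemma hasSum_padicDigit (x : ℤ_[p]) :
    HasSum (fun k => (padicDigit p x k : ℤ_[p]) * (p : ℤ_[p]) ^ k) x := by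
  rw [(PadicInt.summable_mul_p_pow _).hasSum_iff_tendsto_nat, tendsto_iff_norm_sub_tendsto_zero]
  refine squeeze_zero (g := fun n => ((p : ℝ)⁻¹) ^ n) (fun _ => norm_nonneg _) (fun n => ?_)
    (tendsto_pow_atTop_nhds_zero_of_lt_one (by positivity)
      (inv_lt_one_of_one_lt₀ (mod_cast hp.out.one_lt)))
  have hspec := PadicInt.appr_spec n x
  rw [← PadicInt.norm_le_pow_iff_mem_span_pow, zpow_neg, zpow_natCast, ← inv_pow] at hspec
  rw [← norm_neg, neg_sub]
  exact_mod_cast (appr_eq_sum_padicDigit x n) ▸ hspec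

lemma padicDigit_tsum {d : ℕ → ℕ} (hd : ∀ k, d k < p) (k : ℕ) :
    padicDigit p (∑' j, (d j : ℤ_[p]) * (p : ℤ_[p]) ^ j) k = d k := by
  set x := ∑' j, (d j : ℤ_[p]) * (p : ℤ_[p]) ^ j
  have htail := (hasSum_nat_add_iff' (k + 1)).mpr
    (PadicInt.summable_mul_p_pow fun j => (d j : ℤ_[p])).hasSum
  have htail' := (PadicInt.summable_mul_p_pow fun j => (d (j + (k + 1)) : ℤ_[p])).hasSum.mul_left
    ((p : ℤ_[p]) ^ (k + 1))
  have happr : x.appr (k + 1) = ∑ j ∈ range (k + 1), d j * p ^ j := by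
    refine PadicInt.appr_eq_of_sub_mem_span (sum_range_mul_pow_lt hd _)
      (Ideal.mem_span_singleton.mpr ?_)
    refine ⟨_, HasSum.unique (by push_cast; exact htail) (htail'.congr_fun fun j => ?_)⟩
    ring
  rw [padicDigit, happr, sum_range_succ, Nat.add_mul_div_right _ _ (pow_pos hp.out.pos k),
    Nat.div_eq_of_lt (sum_range_mul_pow_lt hd k), zero_add, Nat.mod_eq_of_lt (hd k)]

lemma padicDigit_natCast_mul_pow {m : ℕ} (hm : m < p) (k j : ℕ) :
    padicDigit p ((m : ℤ_[p]) * (p : ℤ_[p]) ^ k) j = if j = k then m else 0 := by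
  have hd : ∀ i, (if i = k then m else 0) < p := fun i => by
    split_ifs
    exacts [hm, hp.out.pos]
  convert padicDigit_tsum hd j using 2
  rw [tsum_eq_single k fun i hi => by simp [hi]]
  simp

lemma padicDigit_natCast {a : ℕ} (ha : a < p) (j : ℕ) :
    padicDigit p (a : ℤ_[p]) j = if j = 0 then a else 0 := by
  simpa using padicDigit_natCast_mul_pow ha 0 j

lemma padicDigit_p_mul_zero (t : ℤ_[p]) : padicDigit p ((p : ℤ_[p]) * t) 0 = 0 := by
  have happr : ((p : ℤ_[p]) * t).appr 1 = 0 :=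
    PadicInt.appr_eq_of_sub_mem_span (by simpa using hp.out.pos)
      (by simp [Ideal.mem_span_singleton])
  simp [padicDigit, happr]

lemma pXor_add_carries (x y : ℤ_[p]) :
    pXor p x y +
      ∑' k, ((if p ≤ padicDigit p x k + padicDigit p y k then p else 0 : ℕ) : ℤ_[p]) *
        (p : ℤ_[p]) ^ k = x + y := by
  refine ((PadicInt.summable_mul_p_pow _).hasSum.add
    (PadicInt.summable_mul_p_pow _).hasSum).unique ?_
  convert (hasSum_padicDigit x).add (hasSum_padicDigit y) using 1
  funext k
  have hdigit := Nat.add_mod_add_ite (padicDigit p x k) (padicDigit p y k) p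
  rw [Nat.mod_eq_of_lt (padicDigit_lt x k), Nat.mod_eq_of_lt (padicDigit_lt y k)] at hdigit
  rw [← add_mul, ← Nat.cast_add, hdigit, Nat.cast_add, add_mul]

lemma pXor_eq_add_of_forall_lt {x y : ℤ_[p]}
    (h : ∀ k, padicDigit p x k + padicDigit p y k < p) : pXor p x y = x + y := by
  simpa [not_le.mpr (h _)] using pXor_add_carries x y

lemma pXor_natCast_p_mul {a : ℕ} (ha : a < p) (t : ℤ_[p]) :
    pXor p a ((p : ℤ_[p]) * t) = a + p * t := by
  refine pXor_eq_add_of_forall_lt fun k => ?_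
  rw [padicDigit_natCast ha]
  rcases k with _ | k
  · simpa [padicDigit_p_mul_zero] using ha
  · simpa using padicDigit_lt _ _

lemma pXor_natCast_mul_pow_add_pow_succ {w : ℤ_[p]} {m k : ℕ} (hm : m < p)
    (hcarry : padicDigit p w k + m = p) :
    pXor p w ((m : ℤ_[p]) * (p : ℤ_[p]) ^ k) + (p : ℤ_[p]) ^ (k + 1) =
      w + (m : ℤ_[p]) * (p : ℤ_[p]) ^ k := by
  have hcarries : ∀ j, (if p ≤ padicDigit p w j +
      padicDigit p (m * p ^ k : ℤ_[p]) j then p else 0) = if j = k then p else 0 := by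
    intro j
    rw [padicDigit_natCast_mul_pow hm]
    by_cases hj : j = k
    · subst hj
      simp [hcarry]
    · simp [hj, padicDigit_lt w j]
  rw [← pXor_add_carries w]
  simp only [hcarries]
  rw [tsum_eq_single k fun j hj => by simp [hj]]
  simp [pow_succ']

lemma padicDigit_succ_eq_zero_of_pXor_p_mul {w : ℤ_[p]}
    (h : ∀ t, pXor p w ((p : ℤ_[p]) * t) = w + p * t) (k : ℕ) :
    padicDigit p w (k + 1) = 0 := by
  by_contra hk
  have hlt := padicDigit_lt w (k + 1)
  have hpow := pXor_natCast_mul_pow_add_pow_succ (w := w) (m := p - padicDigit p w (k + 1))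
    (k := k + 1) (by omega) (by omega)
  rw [pow_succ' _ k, mul_left_comm, h, add_eq_left] at hpow
  exact pow_ne_zero _ (Nat.cast_ne_zero.mpr hp.out.ne_zero) hpow

lemma exists_eq_natCast_of_pXor_p_mul {w : ℤ_[p]}
    (h : ∀ t, pXor p w ((p : ℤ_[p]) * t) = w + p * t) : ∃ e < p, w = e := by
  refine ⟨padicDigit p w 0, padicDigit_lt w 0, (hasSum_padicDigit w).unique ?_⟩
  convert hasSum_single 0 fun k hk => ?_
  · simp
  · obtain ⟨k, rfl⟩ := Nat.exists_eq_succ_of_ne_zero hk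
    simp [padicDigit_succ_eq_zero_of_pXor_p_mul h k]

end Digits

namespace PadicInt

variable {p : ℕ} [hp : Fact p.Prime]

lemma eq_one_of_forall_mul_natCast_lt {c : ℤ_[p]} (hc : c ≠ 0)
    (h : ∀ a < p, ∃ e < p, c * a = e) : c = 1 := by
  have hp1 := hp.out.one_lt
  obtain ⟨d, hdp, hd⟩ := h 1 hp1
  obtain ⟨e, hep, he⟩ := h (p - 1) (by omega)
  rw [Nat.cast_one, mul_one] at hd
  subst hd
  have hde : d * (p - 1) = e := by exact_mod_cast he
  have hd0 : d ≠ 0 := by rintro rfl; exact hc Nat.cast_zero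
  have hd1 : d = 1 := by
    by_contra hd1
    have := Nat.mul_le_mul_right (p - 1) (show 2 ≤ d by omega)
    omega
  rw [hd1, Nat.cast_one]

lemma eq_mul_of_continuous_of_map_add {f : ℤ_[p] → ℤ_[p]}
    (hf : Continuous f) (hadd : ∀ x y, f (x + y) = f x + f y) (x : ℤ_[p]) : f x = f 1 * x := by
  refine congrFun (hf.ext_on denseRange_natCast (continuous_const_mul (f 1)) ?_) x
  rintro _ ⟨n, rfl⟩
  simpa [nsmul_eq_mul, mul_comm] using map_nsmul (AddMonoidHom.mk' f hadd) n 1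

end PadicInt

theorem stmt_13 (p : ℕ) [Fact p.Prime] (f : ℤ_[p] → ℤ_[p])
    (hlip : ∀ x y : ℤ_[p], ‖f x - f y‖ ≤ ‖x - y‖)
    (hadd : ∀ x y : ℤ_[p], f (x + y) = f x + f y)
    (hxor : ∀ x y : ℤ_[p], f (pXor p x y) = pXor p (f x) (f y))
    (hbij : Function.Bijective f) :
    ∀ x : ℤ_[p], f x = x := by
  have hcont : Continuous f := (LipschitzWith.of_dist_le_mul (K := 1) fun x y => by
    simpa [dist_eq_norm] using hlip x y).continuous
  have hlin := PadicInt.eq_mul_of_continuous_of_map_add hcont hadd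
  obtain ⟨u, hu⟩ := hbij.2 1
  rw [hlin] at hu
  -- `a XOR p (u t) = a + p (u t)`; applying `f` gives `f 1 * a XOR p t = f 1 * a + p t`.
  have hdigit : ∀ a < p, ∃ e < p, f 1 * a = e := fun a ha =>
    exists_eq_natCast_of_pXor_p_mul fun t => by
      have hxt := hxor a (p * (u * t))
      rwa [pXor_natCast_p_mul ha, hadd, hlin, hlin (p * (u * t)),
        show f 1 * (p * (u * t)) = (f 1 * u) * (p * t) by ring, hu, one_mul, eq_comm] at hxt
  have hc : f 1 = 1 :=
    PadicInt.eq_one_of_forall_mul_natCast_lt (fun h => by simp [h] at hu) hdigit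
  intro x
  rw [hlin, hc, one_mul]
end

section
/- Let p be a prime. A function f : ℤ_p → ℤ_p preserving coordinate-wise XOR (f(x XOR y) = f(x) XOR f(y)) of the form f(x) = Σ_{k≥0} p^k·φ_k(x_0,…,x_k), where each φ_k takes values in {0,…,p-1}, must have each φ_k linear: φ_k(x_0,…,x_k) = (α_0^{(k)} x_0 + … + α_k^{(k)} x_k) mod p for some coefficients α_i^{(k)} ∈ {0,…,p-1}; moreover such f is bijective on ℤ_p if and only if α_k^{(k)} ≢ 0 (mod p) for all k ≥ 0. -/
namespace StmtAux
variable {p : ℕ} [hp : Fact p.Prime]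

lemma digit_lt (x : ℤ_[p]) (k : ℕ) : padicDigit p x k < p :=
  Nat.mod_lt _ hp.out.pos

lemma appr_succ (x : ℤ_[p]) (n : ℕ) :
    x.appr (n + 1) = x.appr n + p ^ n * padicDigit p x n := by
  obtain ⟨t, ht⟩ := x.dvd_appr_sub_appr n (n + 1) (Nat.le_succ n)
  have hle := x.appr_mono (Nat.le_succ n)
  have h1 : x.appr (n + 1) = x.appr n + p ^ n * t :=
    (Nat.eq_add_of_sub_eq hle ht).trans (Nat.add_comm _ _)
  have hppos : 0 < p ^ n := pow_pos hp.out.pos n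
  have htlt : t < p := by
    have h2 := x.appr_lt (n + 1)
    rw [h1, pow_succ] at h2
    by_contra hge
    push_neg at hge
    have : p ^ n * p ≤ p ^ n * t := Nat.mul_le_mul_left _ hge
    omega
  have : padicDigit p x n = t := by
    unfold padicDigit
    rw [h1, Nat.add_mul_div_left _ _ hppos,
      Nat.div_eq_of_lt (x.appr_lt n), Nat.zero_add, Nat.mod_eq_of_lt htlt]
  rw [this, h1]

lemma appr_eq_sum (x : ℤ_[p]) (n : ℕ) :
    x.appr n = ∑ k ∈ Finset.range n, padicDigit p x k * p ^ k := by
  induction n with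
  | zero => simp [PadicInt.appr]
  | succ n ih => rw [Finset.sum_range_succ, appr_succ, ih, mul_comm]

lemma pinv_lt_one : (p : ℝ)⁻¹ < 1 := by
  rw [inv_lt_one_iff₀]
  right
  exact_mod_cast hp.out.one_lt

lemma summable_aux (c : ℕ → ℕ) :
    Summable (fun k => ((c k : ℤ_[p]) * (p : ℤ_[p]) ^ k)) := by
  apply Summable.of_norm
  apply Summable.of_nonneg_of_le (fun k => norm_nonneg _) (fun k => ?_)
    (summable_geometric_of_lt_one (by positivity) (pinv_lt_one (p := p)))
  calc ‖(c k : ℤ_[p]) * (p : ℤ_[p]) ^ k‖ ≤ ‖(c k : ℤ_[p])‖ * ‖((p : ℤ_[p])) ^ k‖ :=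
        norm_mul_le _ _
    _ ≤ 1 * ((p : ℝ)⁻¹) ^ k := by
        apply mul_le_mul (PadicInt.norm_le_one _) _ (norm_nonneg _) zero_le_one
        simp [PadicInt.norm_p_pow, zpow_neg, zpow_natCast, inv_pow]
    _ = ((p : ℝ)⁻¹) ^ k := one_mul _

lemma tendsto_appr (x : ℤ_[p]) :
    Filter.Tendsto (fun n => ((x.appr n : ℤ_[p]))) Filter.atTop (nhds x) := by
  rw [tendsto_iff_norm_sub_tendsto_zero]
  apply squeeze_zero (fun n => norm_nonneg _) (g := fun n => ((p : ℝ)⁻¹) ^ n)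
    (fun n => ?_) (tendsto_pow_atTop_nhds_zero_of_lt_one (by positivity) (pinv_lt_one (p := p)))
  rw [norm_sub_rev]
  have h := x.appr_spec n
  rw [← PadicInt.norm_le_pow_iff_mem_span_pow] at h
  simpa [zpow_neg, zpow_natCast, inv_pow] using h

lemma hasSum_digits (x : ℤ_[p]) :
    HasSum (fun k => (padicDigit p x k : ℤ_[p]) * (p : ℤ_[p]) ^ k) x := by
  have hs := (summable_aux (p := p) (padicDigit p x)).hasSum
  have ht := hs.tendsto_sum_nat
  have heq : (fun n => ∑ k ∈ Finset.range n, (padicDigit p x k : ℤ_[p]) * (p : ℤ_[p]) ^ k)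
      = fun n => ((x.appr n : ℤ_[p])) := by
    funext n
    rw [appr_eq_sum]
    push_cast
    rfl
  rw [heq] at ht
  rwa [tendsto_nhds_unique ht (tendsto_appr x)] at hs

lemma eq_tsum_digits (x : ℤ_[p]) :
    x = ∑' k, (padicDigit p x k : ℤ_[p]) * (p : ℤ_[p]) ^ k :=
  (hasSum_digits x).tsum_eq.symm

lemma ext_digits {x y : ℤ_[p]} (h : ∀ k, padicDigit p x k = padicDigit p y k) : x = y := by
  rw [eq_tsum_digits x, eq_tsum_digits y]
  exact tsum_congr fun k => by rw [h k]

lemma sum_lt (c : ℕ → ℕ) (hc : ∀ k, c k < p) (n : ℕ) :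
    ∑ i ∈ Finset.range n, c i * p ^ i < p ^ n := by
  induction n with
  | zero => simp
  | succ n ih =>
      rw [Finset.sum_range_succ, pow_succ]
      have h1 : c n * p ^ n ≤ (p - 1) * p ^ n :=
        Nat.mul_le_mul_right _ (by have := hc n; omega)
      have h2 : p ^ n + (p - 1) * p ^ n = p ^ n * p := by
        have h3 : (p - 1) + 1 = p := by have := hp.out.one_lt; omega
        calc p ^ n + (p - 1) * p ^ n = ((p - 1) + 1) * p ^ n := by ring
          _ = p * p ^ n := by rw [h3]
          _ = p ^ n * p := mul_comm _ _
      omega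

lemma appr_tsum (c : ℕ → ℕ) (hc : ∀ k, c k < p) (n : ℕ) :
    (∑' k, (c k : ℤ_[p]) * (p : ℤ_[p]) ^ k).appr n = ∑ i ∈ Finset.range n, c i * p ^ i := by
  set x := ∑' k, (c k : ℤ_[p]) * (p : ℤ_[p]) ^ k with hx
  set m := ∑ i ∈ Finset.range n, c i * p ^ i with hm
  have hsum := summable_aux (p := p) c
  have hmem : x - (m : ℤ_[p]) ∈ Ideal.span {(p : ℤ_[p]) ^ n} := by
    have hsplit := Summable.sum_add_tsum_nat_add n hsum
    have hcast : ((m : ℤ_[p])) = ∑ i ∈ Finset.range n, (c i : ℤ_[p]) * (p : ℤ_[p]) ^ i := by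
      rw [hm]; push_cast; rfl
    have : x - (m : ℤ_[p]) = ∑' i, (c (i + n) : ℤ_[p]) * (p : ℤ_[p]) ^ (i + n) := by
      rw [hcast, sub_eq_iff_eq_add, add_comm]
      exact hsplit.symm
    rw [Ideal.mem_span_singleton, this]
    have hfac : ∀ i : ℕ, (c (i + n) : ℤ_[p]) * (p : ℤ_[p]) ^ (i + n)
        = (p : ℤ_[p]) ^ n * ((c (i + n) : ℤ_[p]) * (p : ℤ_[p]) ^ i) := by
      intro i; rw [pow_add]; ring
    rw [tsum_congr hfac,
      (summable_aux (p := p) (fun i => c (i + n))).tsum_mul_left ((p : ℤ_[p]) ^ n)]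
    exact dvd_mul_right _ _
  have hmem2 : ((x.appr n : ℤ_[p])) - (m : ℤ_[p]) ∈ Ideal.span {(p : ℤ_[p]) ^ n} := by
    have := Ideal.sub_mem _ hmem (x.appr_spec n)
    simpa using this
  have hdvd : ((p : ℤ) ^ n) ∣ ((x.appr n : ℤ) - (m : ℤ)) := by
    rw [Ideal.mem_span_singleton] at hmem2
    rw [← PadicInt.pow_p_dvd_int_iff]
    push_cast
    exact hmem2
  have hb1 : (x.appr n : ℤ) < (p : ℤ) ^ n := by exact_mod_cast x.appr_lt n
  have hb2 : (m : ℤ) < (p : ℤ) ^ n := by exact_mod_cast sum_lt c hc n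
  have h0 : ((x.appr n : ℤ) - (m : ℤ)) = 0 := by
    apply Int.eq_zero_of_abs_lt_dvd hdvd
    rw [abs_lt]
    constructor
    · have : (0 : ℤ) ≤ (m : ℤ) := Int.natCast_nonneg _
      linarith
    · have : (0 : ℤ) ≤ (x.appr n : ℤ) := Int.natCast_nonneg _
      linarith
  have := sub_eq_zero.mp h0
  exact_mod_cast this

lemma digit_tsum (c : ℕ → ℕ) (hc : ∀ k, c k < p) (k : ℕ) :
    padicDigit p (∑' k, (c k : ℤ_[p]) * (p : ℤ_[p]) ^ k) k = c k := by
  unfold padicDigit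
  rw [appr_tsum c hc (k + 1), Finset.sum_range_succ, mul_comm (c k),
    Nat.add_mul_div_left _ _ (pow_pos hp.out.pos k),
    Nat.div_eq_of_lt (sum_lt c hc k), Nat.zero_add, Nat.mod_eq_of_lt (hc k)]

lemma digit_pXor (x y : ℤ_[p]) (k : ℕ) :
    padicDigit p (pXor p x y) k = (padicDigit p x k + padicDigit p y k) % p :=
  digit_tsum _ (fun _ => Nat.mod_lt _ hp.out.pos) k

lemma exists_digits (c : ℕ → ℕ) (hc : ∀ k, c k < p) :
    ∃ x : ℤ_[p], ∀ k, padicDigit p x k = c k :=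
  ⟨∑' k, (c k : ℤ_[p]) * (p : ℤ_[p]) ^ k, digit_tsum c hc⟩

end StmtAux
open StmtAux in
theorem stmt_19 (p : ℕ) [Fact p.Prime] (f : ℤ_[p] → ℤ_[p])
    (φ : ∀ k : ℕ, (Fin (k + 1) → ZMod p) → ZMod p)
    (hf : ∀ x : ℤ_[p],
      f x = ∑' k : ℕ, ((φ k (fun i => (padicDigit p x i : ZMod p))).val : ℤ_[p]) * (p : ℤ_[p]) ^ k)
    (hxor : ∀ x y : ℤ_[p], f (pXor p x y) = pXor p (f x) (f y)) :
    ∃ α : ∀ k : ℕ, Fin (k + 1) → ZMod p,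
      (∀ k : ℕ, ∀ v : Fin (k + 1) → ZMod p, φ k v = ∑ i : Fin (k + 1), α k i * v i) ∧
      (Function.Bijective f ↔ ∀ k : ℕ, α k (Fin.last k) ≠ 0) := by
  classical
  have hp' : p.Prime := Fact.out
  haveI : NeZero p := ⟨hp'.ne_zero⟩
  have hcastval : ∀ a : ZMod p, (((a.val : ℕ) : ZMod p)) = a := fun a =>
    ZMod.natCast_rightInverse a
  -- the k-th digit of f x
  have digit_f : ∀ (x : ℤ_[p]) (k : ℕ),
      padicDigit p (f x) k = (φ k (fun i => (padicDigit p x i : ZMod p))).val := by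
    intro x k
    conv_lhs => rw [hf x]
    exact digit_tsum _ (fun k => ZMod.val_lt _) k
  -- given a vector of digits bounded by p there is an x with those digits on Fin (k+1)
  have exists_vec : ∀ (k : ℕ) (u : Fin (k + 1) → ZMod p), ∃ x : ℤ_[p],
      (∀ i : Fin (k + 1), (padicDigit p x i : ZMod p) = u i) ∧
      (∀ n, padicDigit p x n = if h : n < k + 1 then (u ⟨n, h⟩).val else 0) := by
    intro k u
    obtain ⟨x, hx⟩ := exists_digits (fun n => if h : n < k + 1 then (u ⟨n, h⟩).val else 0)
      (fun n => by
        show (if h : n < k + 1 then (u ⟨n, h⟩).val else 0) < p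
        split
        · exact ZMod.val_lt _
        · exact hp'.pos)
    refine ⟨x, fun i => ?_, hx⟩
    rw [hx, dif_pos i.isLt]
    exact ZMod.natCast_rightInverse _
  -- additivity of φ k
  have hadd : ∀ (k : ℕ) (u v : Fin (k + 1) → ZMod p), φ k (u + v) = φ k u + φ k v := by
    intro k u v
    obtain ⟨x, hxu, -⟩ := exists_vec k u
    obtain ⟨y, hyv, -⟩ := exists_vec k v
    have h1 := congrArg (fun z => (padicDigit p z k : ZMod p)) (hxor x y)
    rw [digit_f (pXor p x y) k, digit_pXor (f x) (f y) k, ZMod.natCast_mod, Nat.cast_add,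
      digit_f x k, digit_f y k, hcastval, hcastval, hcastval] at h1
    have hL : φ k (fun i => (padicDigit p (pXor p x y) i : ZMod p)) = φ k (u + v) := by
      congr 1
      funext i
      rw [digit_pXor, ZMod.natCast_mod, Nat.cast_add, hxu i, hyv i]
      rfl
    have hu : φ k (fun i => (padicDigit p x i : ZMod p)) = φ k u := by
      congr 1; funext i; exact hxu i
    have hv : φ k (fun i => (padicDigit p y i : ZMod p)) = φ k v := by
      congr 1; funext i; exact hyv i
    rw [hL, hu, hv] at h1
    exact h1
  -- linearity
  have hlin : ∀ (k : ℕ) (v : Fin (k + 1) → ZMod p),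
      φ k v = ∑ i : Fin (k + 1), φ k (Pi.single i 1) * v i := by
    intro k v
    let L := AddMonoidHom.toZModLinearMap p (AddMonoidHom.mk' (φ k) (hadd k))
    have hLv : φ k v = L v := rfl
    rw [hLv]
    conv_lhs => rw [← Finset.univ_sum_single v]
    rw [map_sum]
    refine Finset.sum_congr rfl fun i _ => ?_
    have hs : Pi.single i (v i)
        = v i • (Pi.single i (1 : ZMod p) : Fin (k + 1) → ZMod p) := by
      rw [← Pi.single_smul, smul_eq_mul, mul_one]
    rw [hs, map_smul, smul_eq_mul, mul_comm]
    rfl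
  refine ⟨fun k i => φ k (Pi.single i 1), hlin, ?_⟩
  -- ℕ-indexed coefficients
  let β : ℕ → ℕ → ZMod p := fun n i =>
    if h : i < n + 1 then φ n (Pi.single (⟨i, h⟩ : Fin (n + 1)) 1) else 0
  have hβpos : ∀ n i (h : i < n + 1), β n i = φ n (Pi.single (⟨i, h⟩ : Fin (n + 1)) 1) :=
    fun n i h => dif_pos h
  have hβlast : ∀ n, β n n = φ n (Pi.single (Fin.last n) 1) :=
    fun n => hβpos n n (Nat.lt_succ_self n)
  -- digits of f x via β
  have hDf : ∀ (x : ℤ_[p]) (n : ℕ), (padicDigit p (f x) n : ZMod p)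
      = ∑ i ∈ Finset.range (n + 1), β n i * (padicDigit p x i : ZMod p) := by
    intro x n
    rw [digit_f x n, hcastval, hlin n]
    rw [← Fin.sum_univ_eq_sum_range (fun i => β n i * (padicDigit p x i : ZMod p)) (n + 1)]
    exact Finset.sum_congr rfl fun i _ => by rw [hβpos n i i.isLt]
  have hdig_inj : ∀ a b : ℕ, a < p → b < p → ((a : ZMod p) = (b : ZMod p)) → a = b := by
    intro a b ha hb h
    rw [← ZMod.val_cast_of_lt ha, ← ZMod.val_cast_of_lt hb, h]
  -- injectivity from nonvanishing diagonal
  have hinj : (∀ n, β n n ≠ 0) → Function.Injective f := by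
    intro hne a b hab
    apply ext_digits
    intro k
    induction k using Nat.strong_induction_on with
    | _ k ih =>
      apply hdig_inj _ _ (digit_lt a k) (digit_lt b k)
      have h1 : ((padicDigit p (f a) k : ℕ) : ZMod p) = ((padicDigit p (f b) k : ℕ) : ZMod p) := by
        rw [hab]
      rw [hDf a k, hDf b k, Finset.sum_range_succ, Finset.sum_range_succ] at h1
      have hS : ∑ i ∈ Finset.range k, β k i * (padicDigit p a i : ZMod p)
          = ∑ i ∈ Finset.range k, β k i * (padicDigit p b i : ZMod p) :=
        Finset.sum_congr rfl fun i hi => by rw [ih i (Finset.mem_range.mp hi)]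
      rw [hS] at h1
      exact mul_left_cancel₀ (hne k) (add_left_cancel h1)
  -- surjectivity from nonvanishing diagonal
  have hsurj : (∀ n, β n n ≠ 0) → Function.Surjective f := by
    intro hne z
    let g : ℕ → ℕ → ZMod p := fun n =>
      Nat.rec (fun _ => 0) (fun n gn => fun m => if m = n then
        (β n n)⁻¹ * ((padicDigit p z n : ZMod p) - ∑ i ∈ Finset.range n, β n i * gn i)
        else gn m) n
    let c : ℕ → ZMod p := fun n => g (n + 1) n
    have hcoh : ∀ n m, m < n → g n m = c m := by
      intro n
      induction n with
      | zero => exact fun m hm => absurd hm (Nat.not_lt_zero m)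
      | succ n ihn =>
        intro m hm
        rcases Nat.lt_succ_iff_lt_or_eq.mp hm with h | h
        · have h2 : g (n + 1) m = g n m := by
            show (if m = n then _ else g n m) = g n m
            rw [if_neg (Nat.ne_of_lt h)]
          rw [h2, ihn m h]
        · subst h; rfl
    have hkey : ∀ n, ∑ i ∈ Finset.range (n + 1), β n i * c i = (padicDigit p z n : ZMod p) := by
      intro n
      rw [Finset.sum_range_succ]
      have hcn : c n = (β n n)⁻¹ *
          ((padicDigit p z n : ZMod p) - ∑ i ∈ Finset.range n, β n i * g n i) := by
        show (if n = n then _ else _) = _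
        rw [if_pos rfl]
      have hgc : ∑ i ∈ Finset.range n, β n i * g n i = ∑ i ∈ Finset.range n, β n i * c i :=
        Finset.sum_congr rfl fun i hi => by rw [hcoh n i (Finset.mem_range.mp hi)]
      rw [hcn, hgc, ← mul_assoc, mul_inv_cancel₀ (hne n), one_mul, add_comm, sub_add_cancel]
    obtain ⟨x, hx⟩ := exists_digits (fun n => (c n).val) (fun n => ZMod.val_lt _)
    refine ⟨x, ext_digits fun n => ?_⟩
    apply hdig_inj _ _ (digit_lt _ n) (digit_lt _ n)
    rw [hDf x n, ← hkey n]
    refine Finset.sum_congr rfl fun i _ => ?_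
    rw [hx i, hcastval]
  -- bijectivity implies nonvanishing diagonal
  have hfwd : Function.Bijective f → ∀ k, β k k ≠ 0 := by
    intro hbij k hk0
    let T : (Fin (k + 1) → ZMod p) → (Fin (k + 1) → ZMod p) := fun v j =>
      ∑ i ∈ Finset.range ((j : ℕ) + 1), β (j : ℕ) i *
        (if h : i < k + 1 then v ⟨i, h⟩ else 0)
    have hTnotinj : ¬ Function.Injective T := by
      intro hTi
      have h10 : (Pi.single (Fin.last k) (1 : ZMod p) : Fin (k + 1) → ZMod p) = 0 := by
        apply hTi
        funext j
        show ∑ i ∈ Finset.range ((j : ℕ) + 1), β (j : ℕ) i *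
            (if h : i < k + 1 then (Pi.single (Fin.last k) (1 : ZMod p) : Fin (k + 1) → ZMod p)
              ⟨i, h⟩ else 0)
          = ∑ i ∈ Finset.range ((j : ℕ) + 1), β (j : ℕ) i *
            (if h : i < k + 1 then (0 : Fin (k + 1) → ZMod p) ⟨i, h⟩ else 0)
        have hzero2 : ∑ i ∈ Finset.range ((j : ℕ) + 1), β (j : ℕ) i *
            (if h : i < k + 1 then (0 : Fin (k + 1) → ZMod p) ⟨i, h⟩ else 0) = 0 :=
          Finset.sum_eq_zero fun i _ => by
            split
            · rw [Pi.zero_apply, mul_zero]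
            · rw [mul_zero]
        rw [hzero2]
        refine Finset.sum_eq_zero fun i hi => ?_
        have hik1 : i < k + 1 :=
          Nat.lt_succ_of_le (le_trans (Nat.lt_succ_iff.mp (Finset.mem_range.mp hi))
            (Nat.lt_succ_iff.mp j.isLt))
        rw [dif_pos hik1]
        by_cases hik : i = k
        · have hjk : (j : ℕ) = k := by
            have h3 := Nat.lt_succ_iff.mp (Finset.mem_range.mp hi)
            have h4 := Nat.lt_succ_iff.mp j.isLt
            omega
          have hz : β (j : ℕ) i = 0 := by rw [hjk, hik]; exact hk0
          rw [hz, zero_mul]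
        · have hne2 : (⟨i, hik1⟩ : Fin (k + 1)) ≠ Fin.last k :=
            fun hcon => hik (by simpa using congrArg Fin.val hcon)
          rw [Pi.single_eq_of_ne hne2, mul_zero]
      have h11 := congrFun h10 (Fin.last k)
      rw [Pi.single_eq_same, Pi.zero_apply] at h11
      exact one_ne_zero h11
    have hTnotsurj : ¬ Function.Surjective T := fun hs =>
      hTnotinj (Finite.injective_iff_surjective.mpr hs)
    rw [Function.Surjective] at hTnotsurj
    push_neg at hTnotsurj
    obtain ⟨w, hw⟩ := hTnotsurj
    obtain ⟨z, hz⟩ := exists_digits (fun n => if h : n < k + 1 then (w ⟨n, h⟩).val else 0)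
      (fun n => by
        show (if h : n < k + 1 then (w ⟨n, h⟩).val else 0) < p
        split
        · exact ZMod.val_lt _
        · exact hp'.pos)
    obtain ⟨x, hx⟩ := hbij.2 z
    apply hw (fun j => (padicDigit p x (j : ℕ) : ZMod p))
    funext j
    show ∑ i ∈ Finset.range ((j : ℕ) + 1), β (j : ℕ) i *
        (if h : i < k + 1 then (padicDigit p x i : ZMod p) else 0) = w j
    have h1 : ∑ i ∈ Finset.range ((j : ℕ) + 1), β (j : ℕ) i *
        (if h : i < k + 1 then (padicDigit p x i : ZMod p) else 0)
        = ((padicDigit p (f x) (j : ℕ) : ℕ) : ZMod p) := by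
      rw [hDf x (j : ℕ)]
      refine Finset.sum_congr rfl fun i hi => ?_
      have hik1 : i < k + 1 :=
        Nat.lt_succ_of_le (le_trans (Nat.lt_succ_iff.mp (Finset.mem_range.mp hi))
          (Nat.lt_succ_iff.mp j.isLt))
      rw [dif_pos hik1]
    rw [h1, hx, hz (j : ℕ), dif_pos j.isLt]
    exact hcastval _
  constructor
  · intro hbij k
    show φ k (Pi.single (Fin.last k) 1) ≠ 0
    rw [← hβlast k]
    exact hfwd hbij k
  · intro hne
    have hne' : ∀ n, β n n ≠ 0 := fun n => by rw [hβlast n]; exact hne n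
    exact ⟨hinj hne', hsurj hne'⟩
end
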